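/- arXiv:2105.07746 — 2 statements merged into one kernel-verified Lean document; each statement's English description precedes it below -/
import Mathlib

section
/- Let κ be a regular uncountable cardinal that is not inaccessible, let λ < κ be minimal with 2^λ ≥ κ, and let f : κ → 2^λ be injective. For s ∈ 2^{<λ} set x_s = {i < κ : s is an initial segment of f(i)}. Then X = {x_s : s ∈ 2^{<λ} and x_s is stationary} is a stationary splitting family of cardinality at most 2^{<λ} < κ. -/
open Set Cardinal

/-- `c` is a club in the well-ordered type `α` (thought of as the cardinal `κ = #α`):
it is closed (contains the supremum of each of its nonempty bounded subsets) and unbounded. -/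
def IsClubIn {α : Type*} [LinearOrder α] (c : Set α) : Prop :=
  (∀ s ⊆ c, s.Nonempty → ∀ a : α, IsLUB s a → a ∈ c) ∧ ∀ a : α, ∃ b ∈ c, a < b

/-- `x` is stationary: it meets every club. -/
def IsStatIn {α : Type*} [LinearOrder α] (x : Set α) : Prop :=
  ∀ c : Set α, IsClubIn c → (x ∩ c).Nonempty

/-- `y` stationarily splits `x`: both `x ∩ y` and `x \ y` are stationary. -/
def StatSplits {α : Type*} [LinearOrder α] (y x : Set α) : Prop :=
  IsStatIn (x ∩ y) ∧ IsStatIn (x \ y)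

/-- For `s ∈ 2^{<λ}` coded by a pair `(b, g)` (i.e. `s = g ↾ (Iio b)`), the set
`x_s = {i < κ : s ⊴ f i}` of all `i` such that `s` is an initial segment of `f i`. -/
def segSet {α β : Type*} [LinearOrder β] (f : α → β → Bool) (b : β) (g : β → Bool) :
    Set α :=
  {i : α | ∀ c < b, f i c = g c}

open Function

/-!
Stationarity is preserved under covers by fewer than `κ` sets, because clubs are closed under
intersections of fewer than `κ` of them. Covering a stationary `x` by the `x_s` with `s` of
length `b` (there are `2 ^ |b| < κ` of them) shows that on every level some `x_s` meets `x`
stationarily. If no `x_s` splits `x`, that `s` is unique on each level, so these `s` cohere to a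
branch `G ∈ 2^λ`. Then `x` is covered by the fewer than `κ` non-stationary sets `x \ x_{G ↾ b}`
together with `f⁻¹ {G}`, which has at most one point as `f` is injective: a contradiction.
-/

theorem IsLUB.range_of_interleave {γ : Type*} [Preorder γ] {s t : ℕ → γ} {u : γ}
    (hs : IsLUB (range s) u) (hst : ∀ n, s n ≤ t n) (hts : ∀ n, t n ≤ s (n + 1)) :
    IsLUB (range t) u :=
  ⟨forall_mem_range.2 fun n => (hts n).trans (hs.1 ⟨n + 1, rfl⟩),
    fun _ hv => hs.2 (forall_mem_range.2 fun n => (hst n).trans (hv ⟨n, rfl⟩))⟩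

theorem self_le_two_powerlt (c : Cardinal) : c ≤ 2 ^< c := by
  by_contra! h
  exact (cantor _).not_ge (le_powerlt 2 h)

theorem powerlt_le_iSup_mk_Iio {β : Type u} [LinearOrder β] [WellFoundedLT β]
    (c : Cardinal.{u}) : c ^< #β ≤ ⨆ b : β, c ^ #(Iio b) := by
  refine powerlt_le.2 fun μ hμ => ?_
  obtain ⟨b, hb⟩ :=
    Ordinal.typein_surj (α := β) (· < ·) ((ord_lt_ord.2 hμ).trans_le (ord_le_type _))
  have hμb := Ordinal.card_typein (r := ((· < ·) : β → β → Prop)) b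
  simp only [hb, card_ord] at hμb
  exact hμb ▸ le_ciSup bddAbove_of_small b

section Order

variable {α : Type u} [LinearOrder α]

theorem exists_isLUB_of_bddAbove [WellFoundedLT α] {s : Set α} (hs : BddAbove s) :
    ∃ u, IsLUB s u := by
  obtain ⟨u, hu, hmin⟩ := wellFounded_lt.has_min (upperBounds s) hs
  exact ⟨u, hu, fun v hv => not_lt.1 (hmin v hv)⟩

theorem mk_Iic_lt_of_mk_Iio_lt (hα : ℵ₀ ≤ #α) (hinit : ∀ a : α, #(Iio a) < #α)
    (a : α) : #(Iic a) < #α := by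
  rw [← Iio_insert]
  exact mk_insert_le.trans_lt (add_lt_of_lt hα (hinit a) (one_lt_aleph0.trans_le hα))

theorem noMaxOrder_of_mk_Iio_lt (hα : ℵ₀ ≤ #α) (hinit : ∀ a : α, #(Iio a) < #α) :
    NoMaxOrder α := by
  refine ⟨fun a => ?_⟩
  by_contra! h
  have : Iic a = Set.univ := eq_univ_of_forall h
  exact (mk_Iic_lt_of_mk_Iio_lt hα hinit a).ne (by rw [this, mk_univ])

theorem exists_forall_lt_of_mk_lt (hreg : (#α).IsRegular) (hinit : ∀ a : α, #(Iio a) < #α)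
    {s : Set α} (hs : #s < #α) : ∃ b, ∀ a ∈ s, a < b := by
  by_contra! h
  have hcover : (Set.univ : Set α) ⊆ ⋃ a ∈ s, Iic a := fun c _ => by
    obtain ⟨a, has, hca⟩ := h c
    exact mem_biUnion has hca
  have hsmall : #(⋃ a ∈ s, Iic a) < #α :=
    (mk_biUnion_le _ _).trans_lt <| mul_lt_of_lt hreg.aleph0_le hs <|
      iSup_lt_of_lt_cof_ord (by rwa [hreg.cof_ord])
        fun a => mk_Iic_lt_of_mk_Iio_lt hreg.aleph0_le hinit a
  exact (mk_le_mk_of_subset hcover).not_gt (by rwa [mk_univ])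

end Order

section Club

variable {α : Type u} [LinearOrder α]

theorem IsStatIn.mono {x y : Set α} (hxy : x ⊆ y) (hx : IsStatIn x) : IsStatIn y :=
  fun c hc => (hx c hc).mono (inter_subset_inter_left c hxy)

theorem isClubIn_univ [NoMaxOrder α] : IsClubIn (Set.univ : Set α) :=
  ⟨fun _ _ _ _ _ => trivial, fun a => (exists_gt a).imp fun _ hb => ⟨trivial, hb⟩⟩

theorem isClubIn_Ioi [NoMaxOrder α] (a : α) : IsClubIn (Ioi a) := by
  refine ⟨fun s hs ⟨e, he⟩ b hb => (hs he).trans_le (hb.1 he), fun b => ?_⟩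
  obtain ⟨c, hc⟩ := exists_gt (max a b)
  exact ⟨c, (le_max_left a b).trans_lt hc, (le_max_right a b).trans_lt hc⟩

theorem Set.Subsingleton.not_isStatIn [NoMaxOrder α] {s : Set α} (hs : s.Subsingleton) :
    ¬IsStatIn s := fun hstat => by
  obtain ⟨i₀, hi₀, -⟩ := hstat Set.univ isClubIn_univ
  obtain ⟨i, hi, hlt⟩ := hstat _ (isClubIn_Ioi i₀)
  exact (mem_Ioi.1 hlt).ne' (hs hi hi₀)

variable [WellFoundedLT α] (hreg : (#α).IsRegular) (hunc : ℵ₀ < #α)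
  (hinit : ∀ a : α, #(Iio a) < #α)
include hreg hunc hinit

theorem IsClubIn.iInter {ι : Type u} (hι : #ι < #α) {c : ι → Set α}
    (hc : ∀ j, IsClubIn (c j)) : IsClubIn (⋂ j, c j) := by
  refine ⟨fun s hs hne a ha => mem_iInter.2 fun j =>
    (hc j).1 s (fun i hi => mem_iInter.1 (hs hi) j) hne a ha, fun a => ?_⟩
  choose next hnext_mem hlt_next using fun j => (hc j).2
  have hstep : ∀ a, ∃ b, a < b ∧ ∀ j, next j a < b := fun a => by
    obtain ⟨b, hb⟩ := exists_forall_lt_of_mk_lt hreg hinit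
      (s := insert a (range fun j => next j a)) <| mk_insert_le.trans_lt <|
        add_lt_of_lt hreg.aleph0_le (mk_range_le.trans_lt hι)
          (one_lt_aleph0.trans_le hreg.aleph0_le)
    exact ⟨b, hb a (mem_insert _ _), fun j => hb _ (mem_insert_of_mem _ ⟨j, rfl⟩)⟩
  choose step hlt_step hnext_lt_step using hstep
  -- the supremum of `a < step a < step (step a) < ⋯` is also that of the `next j`s in between
  let seq : ℕ → α := fun n => step^[n] a
  obtain ⟨b, hb⟩ := exists_forall_lt_of_mk_lt hreg hinit (s := range seq)
    ((mk_le_aleph0_iff.2 (countable_range seq).to_subtype).trans_lt hunc)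
  obtain ⟨u, hu⟩ :=
    exists_isLUB_of_bddAbove ⟨b, forall_mem_range.2 fun n => (hb _ ⟨n, rfl⟩).le⟩
  refine ⟨u, mem_iInter.2 fun j => (hc j).1 _ ?_ (range_nonempty _) u
    (hu.range_of_interleave (t := fun n => next j (seq n)) (fun n => (hlt_next j _).le)
      fun n => ?_), (hlt_step a).trans_le (hu.1 ⟨1, rfl⟩)⟩
  · rintro _ ⟨n, rfl⟩
    exact hnext_mem j (seq n)
  · rw [show seq (n + 1) = step (seq n) from iterate_succ_apply' step n a]
    exact (hnext_lt_step _ j).le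

theorem IsStatIn.exists_isStatIn_inter_of_subset_iUnion {ι : Type u} (hι : #ι < #α)
    {x : Set α} (hx : IsStatIn x) {y : ι → Set α} (hxy : x ⊆ ⋃ j, y j) :
    ∃ j, IsStatIn (x ∩ y j) := by
  by_contra! h
  simp only [IsStatIn] at h
  push Not at h
  choose c hc hdisj using h
  obtain ⟨i, hix, hic⟩ := hx _ (IsClubIn.iInter hreg hunc hinit hι hc)
  obtain ⟨j, hj⟩ := mem_iUnion.1 (hxy hix)
  exact (hdisj j).subset ⟨⟨hix, hj⟩, mem_iInter.1 hic j⟩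

end Club

section SegSet

variable {α β : Type u} [LinearOrder β] (f : α → β → Bool)

theorem mem_segSet_self (i : α) (b : β) : i ∈ segSet f b (f i) := fun _ _ => rfl

theorem segSet_anti {b b' : β} (h : b' ≤ b) (g : β → Bool) : segSet f b g ⊆ segSet f b' g :=
  fun _ hi c hc => hi c (hc.trans_le h)

theorem segSet_congr {b : β} {g g' : β → Bool} (h : ∀ c < b, g c = g' c) :
    segSet f b g = segSet f b g' := by
  ext i
  exact forall₂_congr fun c hc => by rw [h c hc]

theorem mk_range_segSet_le (b : β) : #(range (segSet f b)) ≤ 2 ^ #(Iio b) :=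
  calc #(range (segSet f b))
      ≤ #(range fun s : Iio b → Bool => (fun i (c : Iio b) => f i c) ⁻¹' {s}) := by
        refine mk_le_mk_of_subset ?_
        rintro _ ⟨g, rfl⟩
        refine ⟨fun c => g c, ?_⟩
        ext i
        simp [segSet, funext_iff]
    _ ≤ #(Iio b → Bool) := mk_range_le
    _ = 2 ^ #(Iio b) := by simp

theorem mk_setOf_segSet_le (hβ : ℵ₀ ≤ #β) (hinit : ∀ b : β, #(Iio b) < #β) :
    #{x : Set α | ∃ b g, x = segSet f b g} ≤ 2 ^< #β :=
  calc #{x : Set α | ∃ b g, x = segSet f b g}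
      = #(⋃ b, range (segSet f b)) := by
        congr 2
        ext x
        simp [eq_comm]
    _ ≤ #β * ⨆ b, #(range (segSet f b)) := mk_iUnion_le _
    _ ≤ 2 ^< #β * 2 ^< #β := mul_le_mul' (self_le_two_powerlt _)
        (ciSup_le' fun b => (mk_range_segSet_le f b).trans (le_powerlt 2 (hinit b)))
    _ = 2 ^< #β := mul_eq_self (hβ.trans (self_le_two_powerlt _))

end SegSet

section Splitting

variable {α β : Type u} [LinearOrder α] [LinearOrder β] {f : α → β → Bool}

theorem segSet_eqOn_of_not_statSplits {x : Set α} {b : β} {g g' : β → Bool}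
    (hsplit : ¬StatSplits (segSet f b g) x) (hg : IsStatIn (x ∩ segSet f b g))
    (hg' : IsStatIn (x ∩ segSet f b g')) {c : β} (hc : c < b) : g c = g' c := by
  by_contra hne
  exact hsplit ⟨hg, hg'.mono fun i hi =>
    ⟨hi.1, fun hi' => hne ((hi' c hc).symm.trans (hi.2 c hc))⟩⟩

variable [WellFoundedLT α] (hreg : (#α).IsRegular) (hunc : ℵ₀ < #α)
  (hinit : ∀ a : α, #(Iio a) < #α)
include hreg hunc hinit

theorem exists_isStatIn_inter_segSet {b : β} (hlevel : 2 ^ #(Iio b) < #α) {x : Set α}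
    (hx : IsStatIn x) : ∃ g, IsStatIn (x ∩ segSet f b g) := by
  obtain ⟨⟨_, g, rfl⟩, hg⟩ := hx.exists_isStatIn_inter_of_subset_iUnion hreg hunc hinit
    ((mk_range_segSet_le f b).trans_lt hlevel) (y := Subtype.val)
    fun i _ => mem_iUnion.2 ⟨⟨_, f i, rfl⟩, mem_segSet_self f i b⟩
  exact ⟨g, hg⟩

theorem exists_forall_isStatIn_inter_segSet [NoMaxOrder β]
    (hlevel : ∀ b : β, 2 ^ #(Iio b) < #α) {x : Set α} (hx : IsStatIn x)
    (hsplit : ∀ b g, ¬StatSplits (segSet f b g) x) :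
    ∃ G, ∀ b, IsStatIn (x ∩ segSet f b G) := by
  choose g hg using fun b => exists_isStatIn_inter_segSet hreg hunc hinit (hlevel b) hx
  have hcoh : ∀ b b' c, c < b → c < b' → g b c = g b' c := fun b b' c hb hb' =>
    segSet_eqOn_of_not_statSplits (hsplit (min b b') (g b))
      ((hg b).mono (inter_subset_inter_right x (segSet_anti f (min_le_left b b') _)))
      ((hg b').mono (inter_subset_inter_right x (segSet_anti f (min_le_right b b') _)))
      (lt_min hb hb')
  choose next hnext using fun c : β => exists_gt c
  refine ⟨fun c => g (next c) c, fun b => ?_⟩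
  rw [← segSet_congr f fun c hc => hcoh b (next c) c hc (hnext c)]
  exact hg b

theorem exists_isStatIn_diff_segSet (hβ : #β < #α) [NoMaxOrder β] (hf : Injective f)
    {x : Set α} (hx : IsStatIn x) (G : β → Bool) : ∃ b, IsStatIn (x \ segSet f b G) := by
  have : NoMaxOrder α := noMaxOrder_of_mk_Iio_lt hreg.aleph0_le hinit
  have hcover : x ⊆ ⋃ o : Option β, o.elim {i | f i = G} fun b => x \ segSet f b G := by
    intro i hi
    by_cases hG : f i = G
    · exact mem_iUnion.2 ⟨none, hG⟩
    · obtain ⟨c, hc⟩ := not_forall.1 (mt funext hG)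
      obtain ⟨b, hb⟩ := exists_gt c
      exact mem_iUnion.2 ⟨some b, hi, fun h => hc (h c hb)⟩
  have hO : #(Option β) < #α := by
    rw [mk_option]
    exact add_lt_of_lt hreg.aleph0_le hβ (one_lt_aleph0.trans_le hreg.aleph0_le)
  obtain ⟨o, ho⟩ := hx.exists_isStatIn_inter_of_subset_iUnion hreg hunc hinit hO hcover
  cases o with
  | none =>
    have hsub : {i | f i = G}.Subsingleton := fun i hi j hj => hf (hi.trans hj.symm)
    exact (hsub.not_isStatIn (ho.mono inter_subset_right)).elim
  | some b => exact ⟨b, ho.mono inter_subset_right⟩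

theorem exists_segSet_statSplits (hβ : #β < #α) [NoMaxOrder β]
    (hlevel : ∀ b : β, 2 ^ #(Iio b) < #α) (hf : Injective f) {x : Set α} (hx : IsStatIn x) :
    ∃ b g, StatSplits (segSet f b g) x := by
  by_contra! hsplit
  obtain ⟨G, hG⟩ := exists_forall_isStatIn_inter_segSet hreg hunc hinit hlevel hx hsplit
  obtain ⟨b, hb⟩ := exists_isStatIn_diff_segSet hreg hunc hinit hβ hf hx G
  exact hsplit b G ⟨hG b, hb⟩

end Splitting

theorem splitting_family_of_not_inaccessible_general {α β : Type u} [LinearOrder α] [WellFoundedLT α]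
    [LinearOrder β] [WellFoundedLT β]
    (hreg : (#α).IsRegular)
    (hinitα : ∀ a : α, #(Set.Iio a) < #α)
    (hinitβ : ∀ b : β, #(Set.Iio b) < #β)
    (hlt : #β < #α)
    (hmin : ∀ μ : Cardinal, μ < #β → 2 ^ μ < #α)
    (f : α → β → Bool) (hf : Function.Injective f) :
    (∀ y ∈ {x : Set α | (∃ (b : β) (g : β → Bool), x = segSet f b g) ∧ IsStatIn x},
        IsStatIn y) ∧
    (∀ x : Set α, IsStatIn x →
      ∃ y ∈ {x : Set α | (∃ (b : β) (g : β → Bool), x = segSet f b g) ∧ IsStatIn x},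
        StatSplits y x) ∧
    #{x : Set α | (∃ (b : β) (g : β → Bool), x = segSet f b g) ∧ IsStatIn x} ≤ 2 ^< #β ∧
    2 ^< #β < #α := by
  have hαβ : #α ≤ 2 ^ #β := by simpa [mk_arrow] using mk_le_of_injective hf
  have hβ : ℵ₀ ≤ #β := by
    by_contra! hfin
    exact (hreg.aleph0_le.trans hαβ).not_gt (power_lt_aleph0 ofNat_lt_aleph0 hfin)
  have : NoMaxOrder β := noMaxOrder_of_mk_Iio_lt hβ hinitβ
  have hlevel : ∀ b : β, 2 ^ #(Iio b) < #α := fun b => hmin _ (hinitβ b)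
  refine ⟨fun y hy => hy.2, fun x hx => ?_,
    (mk_le_mk_of_subset fun y hy => hy.1).trans (mk_setOf_segSet_le f hβ hinitβ),
    (powerlt_le_iSup_mk_Iio 2).trans_lt (iSup_lt_of_lt_cof_ord (by rwa [hreg.cof_ord]) hlevel)⟩
  obtain ⟨b, g, hsplit⟩ :=
    exists_segSet_statSplits hreg (hβ.trans_lt hlt) hinitα hlt hlevel hf hx
  exact ⟨segSet f b g, ⟨⟨b, g, rfl⟩, hsplit.1.mono inter_subset_right⟩, hsplit⟩

/-- Let `κ` be regular uncountable but not inaccessible, let `λ < κ` be minimal with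
`2^λ ≥ κ` and let `f : κ → 2^λ` be injective. For `s ∈ 2^{<λ}` let
`x_s = {i < κ : s ⊴ f i}`. Then `X = {x_s : s ∈ 2^{<λ}, x_s stationary}` is a stationary
splitting family of cardinality at most `2^{<λ} < κ`.
Here `κ` and `λ` are represented by well-ordered types `α` and `β` (in the same universe)
all of whose proper initial segments are small; the elements `s ∈ 2^{<λ}` are coded by pairs
`(b, g)` with `b : β`, `g : β → Bool` via `s = g ↾ (Iio b)`. -/
theorem splitting_family_of_not_inaccessible {α β : Type u} [LinearOrder α] [WellFoundedLT α]
    [LinearOrder β] [WellFoundedLT β]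
    (hreg : (#α).IsRegular) (hunc : ℵ₀ < #α)
    (hinitα : ∀ a : α, #(Set.Iio a) < #α)
    (hinitβ : ∀ b : β, #(Set.Iio b) < #β)
    (hlt : #β < #α) (hpow : #α ≤ 2 ^ #β)
    (hmin : ∀ μ : Cardinal, μ < #β → 2 ^ μ < #α)
    (f : α → β → Bool) (hf : Function.Injective f) :
    (∀ y ∈ {x : Set α | (∃ (b : β) (g : β → Bool), x = segSet f b g) ∧ IsStatIn x},
        IsStatIn y) ∧
    (∀ x : Set α, IsStatIn x →
      ∃ y ∈ {x : Set α | (∃ (b : β) (g : β → Bool), x = segSet f b g) ∧ IsStatIn x},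
        StatSplits y x) ∧
    #{x : Set α | (∃ (b : β) (g : β → Bool), x = segSet f b g) ∧ IsStatIn x} ≤ 2 ^< #β ∧
    2 ^< #β < #α :=
  splitting_family_of_not_inaccessible_general hreg hinitα hinitβ hlt hmin f hf
end

section
/- Let κ be a regular uncountable cardinal. Then the stationary splitting number s^cl_κ is strictly greater than κ if and only if κ has the normal* filter property. -/
open Set Cardinal

/-- The stationary splitting number `s^cl_κ`: the least cardinality of a family `S` of
stationary sets such that every stationary set is stationarily split by a member of `S`. -/
noncomputable def statSplittingNumber (α : Type*) [LinearOrder α] : Cardinal :=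
  sInf { c : Cardinal | ∃ S : Set (Set α), (∀ y ∈ S, IsStatIn y) ∧
    (∀ x : Set α, IsStatIn x → ∃ y ∈ S, StatSplits y x) ∧ c = #S }

/-- `F` is a uniform filter on `κ`: a filter all of whose members have cardinality `κ`,
containing all co-bounded sets. -/
def IsUniformFilter {α : Type*} [LinearOrder α] (F : Set (Set α)) : Prop :=
  Set.univ ∈ F ∧ (∀ x ∈ F, ∀ y : Set α, x ⊆ y → y ∈ F) ∧
    (∀ x ∈ F, ∀ y ∈ F, x ∩ y ∈ F) ∧ (∀ x ∈ F, #x = #α) ∧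
    ∀ x : Set α, BddAbove xᶜ → x ∈ F

/-- `F` is normal*: the diagonal intersection of every `κ`-sequence of members of `F` is
stationary. -/
def IsNormalStar {α : Type*} [LinearOrder α] (F : Set (Set α)) : Prop :=
  ∀ f : α → Set α, (∀ i, f i ∈ F) → IsStatIn {k : α | ∀ i < k, k ∈ f i}

/-- `F` measures `X`: for every `x ∈ X` either `x ∈ F` or `κ \ x ∈ F`. -/
def Measures {α : Type*} (F X : Set (Set α)) : Prop :=
  ∀ x ∈ X, x ∈ F ∨ xᶜ ∈ F

/-- `κ` has the normal* filter property: every `X ⊆ P(κ)` of size at most `κ` is measured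
by some normal* uniform filter. -/
def NormalStarFilterProperty (α : Type*) [LinearOrder α] : Prop :=
  ∀ X : Set (Set α), #X ≤ #α →
    ∃ F : Set (Set α), IsUniformFilter F ∧ IsNormalStar F ∧ Measures F X

/-!
(→) Given `X` of size at most `κ`, its stationary members do not form a splitting family, so some
stationary `x` is split by none of them. The club filter restricted to `x` then measures `X`, is
uniform because stationary sets are unbounded, and is normal* because clubs are closed under
diagonal intersections.

(←) Suppose `S = {y_i : i < κ}` were a splitting family and `F` a normal* filter measuring `S`. Pick
`f_i ∈ F` among `y_i` and its complement; the diagonal intersection `D` of the `f_i` is stationary,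
yet `D` lies in `f_i` above `i`, so `y_i` does not split `D`, whichever `i` we take.

That `s^cl_κ` is the size of some splitting family at all is the weak form of Solovay's theorem:
every stationary `x` splits. Call `a ∈ x` nonreflecting when some `h_a : a → a` has no closure point
in `x ∩ a`; the least point of `x` that is a closure point of the successor function of a club `C`
lies in `C` and is nonreflecting, so nonreflecting points are stationary. If for each `ξ` the values
`h_a ξ` were bounded by some `η_ξ` on a club, then a point of `x` closed under `ξ ↦ η_ξ` would be a
closure point of `h_a` for any nonreflecting `a` above it in the diagonal intersection of those
clubs. So some `a ↦ h_a ξ` is regressive and stationarily often above every `η`, and Fodor's lemma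
applied twice gives it two stationary fibres.
-/

open Order

section LinearOrder
variable {α : Type*} [LinearOrder α] {s c : Set α} {a b : α}

theorem isLUB_of_forall_exists_gt (hb : ∀ x ∈ s, x ≤ b) (h : ∀ x < b, ∃ y ∈ s, x < y) :
    IsLUB s b :=
  ⟨hb, fun _ hu ↦ le_of_forall_lt fun x hx ↦
    let ⟨_, hy, hxy⟩ := h x hx
    hxy.trans_le (hu hy)⟩

theorem exists_forall_lt_of_cardinalMk_lt_cof (h : #s < cof α) : ∃ b, ∀ x ∈ s, x < b :=
  not_isCofinal_iff.1 fun hs ↦ (cof_le hs).not_gt h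

theorem BddAbove.exists_isLUB [WellFoundedLT α] (h : BddAbove s) : ∃ b, IsLUB s b :=
  let ⟨b, hb, hmin⟩ := wellFounded_lt.has_min _ h
  ⟨b, hb, fun _ hx ↦ not_lt.1 (hmin _ hx)⟩

theorem IsClub.exists_gt [NoMaxOrder α] (hc : IsClub c) (a : α) : ∃ b ∈ c, a < b :=
  let ⟨a', ha'⟩ := NoMaxOrder.exists_gt a
  let ⟨b, hb, hab⟩ := hc.isCofinal a'
  ⟨b, hb, ha'.trans_le hab⟩

theorem IsClub.mem_of_forall_inter_Ioo_nonempty (hc : IsClub c) (hab : a < b)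
    (h : ∀ x < b, (c ∩ Ioo x b).Nonempty) : b ∈ c := by
  obtain ⟨y, hy, -, hyb⟩ := h a hab
  refine hc.isLUB_mem inter_subset_left ⟨y, hy, hyb⟩ <|
    isLUB_of_forall_exists_gt (fun _ hz ↦ le_of_lt hz.2) fun x hx ↦ ?_
  obtain ⟨z, hz, hxz, hzb⟩ := h x hx
  exact ⟨z, ⟨hz, hzb⟩, hxz⟩

theorem isClub_Ioi [NoMaxOrder α] (a : α) : IsClub (Ioi a) where
  dirSupClosed := dirSupClosed_iff_of_linearOrder.2 fun _ hd ⟨_, hy⟩ _ hb ↦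
    (hd hy).trans_le (hb.1 hy)
  isCofinal x :=
    let ⟨b, hb⟩ := exists_gt (max a x)
    ⟨b, (le_max_left a x).trans_lt hb, (le_max_right a x).trans hb.le⟩

theorem not_isStationary_of_bddAbove [NoMaxOrder α] (h : BddAbove s) : ¬ IsStationary s := by
  intro hs
  obtain ⟨u, hu⟩ := h
  obtain ⟨k, hks, hk⟩ := hs (isClub_Ioi u)
  exact (hu hks).not_gt hk

theorem IsStationary.inter_isClub [WellFoundedLT α] (hα : cof α ≠ ℵ₀) (hs : IsStationary s)
    (hc : IsClub c) : IsStationary (s ∩ c) := fun _ ht ↦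
  let ⟨k, hks, hkc, hkt⟩ := hs (hc.inter hα ht)
  ⟨k, ⟨hks, hkc⟩, hkt⟩

end LinearOrder

section RegularUncountable
variable {α : Type*} [LinearOrder α] [WellFoundedLT α] [IsRegularCardinalOrder α]
  (hα : ℵ₀ < cof α)

include hα

theorem cardinalMk_Iic_lt_cof (a : α) : #(Iic a) < cof α := by
  rw [cof_eq_cardinalMk] at hα ⊢
  exact mk_Iic_lt a ord_cardinalMk hα.le

omit [IsRegularCardinalOrder α] in
theorem exists_isLUB_range (u : ℕ → α) : ∃ b, IsLUB (range u) b :=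
  BddAbove.exists_isLUB <| .of_not_isCofinal fun h ↦
    ((cof_le h).trans (countable_range u).le_aleph0).not_gt hα

theorem isClub_setOf_mapsTo_Iio (f : α → α) : IsClub {b | MapsTo f (Iio b) (Iio b)} := by
  refine ⟨dirSupClosed_iff_of_linearOrder.2 fun d hd _ b hb x hx ↦ ?_, fun a ↦ ?_⟩
  · obtain ⟨y, hy, hxy, hyb⟩ := hb.exists_between hx
    exact (hd hy hxy).trans_le hyb
  · have hbound (x : α) : ∃ y, ∀ z ∈ f '' Iic x, z < y :=
      exists_forall_lt_of_cardinalMk_lt_cof (mk_image_le.trans_lt (cardinalMk_Iic_lt_cof hα x))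
    choose g hg using hbound
    obtain ⟨b, hb⟩ := exists_isLUB_range hα fun n ↦ g^[n] a
    refine ⟨b, fun x hx ↦ ?_, hb.1 ⟨0, rfl⟩⟩
    obtain ⟨_, ⟨n, rfl⟩, hxn, -⟩ := hb.exists_between hx
    refine (hg _ _ (mem_image_of_mem f (le_of_lt hxn))).trans_le (hb.1 ⟨n + 1, ?_⟩)
    exact Function.iterate_succ_apply' g n a

theorem isClub_diagInter [NoMaxOrder α] {c : α → Set α} (hc : ∀ i, IsClub (c i)) :
    IsClub {k | ∀ i < k, k ∈ c i} := by
  refine ⟨dirSupClosed_iff_of_linearOrder.2 fun d hd _ b hb i hi ↦ ?_, fun a ↦ ?_⟩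
  · obtain ⟨y, hy, hiy, -⟩ := hb.exists_between hi
    refine (hc i).isLUB_mem (t := d ∩ Ioi i) (fun k hk ↦ hd hk.1 i hk.2) ⟨y, hy, hiy⟩ <|
      isLUB_of_forall_exists_gt (fun k hk ↦ hb.1 hk.1) fun x hx ↦ ?_
    obtain ⟨z, hz, hxz, -⟩ := hb.exists_between (max_lt hx hi)
    exact ⟨z, ⟨hz, (le_max_right x i).trans_lt hxz⟩, (le_max_left x i).trans_lt hxz⟩
  · have hstep (x : α) : ∃ y, x < y ∧ ∀ i ≤ x, y ∈ c i := by
      have hD : IsClub (⋂₀ (c '' Iic x)) := IsClub.sInter hα.ne'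
        (mk_image_le.trans_lt (cardinalMk_Iic_lt_cof hα x)) (forall_mem_image.2 fun i _ ↦ hc i)
      obtain ⟨y, hy, hxy⟩ := hD.exists_gt x
      exact ⟨y, hxy, fun i hi ↦ hy _ (mem_image_of_mem c hi)⟩
    choose g hgx hgc using hstep
    obtain ⟨b, hb, hab⟩ := (isClub_setOf_mapsTo_Iio hα g).isCofinal a
    refine ⟨b, fun i hi ↦ (hc i).mem_of_forall_inter_Ioo_nonempty hi fun x hx ↦ ?_, hab⟩
    exact ⟨g (max x i), hgc _ i (le_max_right x i),
      (le_max_left x i).trans_lt (hgx _), hb (max_lt hx hi)⟩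

end RegularUncountable

section Stationary
variable {α : Type*} [LinearOrder α] [WellFoundedLT α] [IsRegularCardinalOrder α] [NoMaxOrder α]
  (hα : ℵ₀ < cof α) {s : Set α}

theorem IsStationary.cardinalMk_eq (hs : IsStationary s) : #s = #α := by
  refine (mk_set_le s).antisymm ?_
  rw [← cof_eq_cardinalMk]
  exact cof_le (.of_not_bddAbove fun h ↦ not_isStationary_of_bddAbove h hs)

include hα

/-- Fodor's lemma. -/
theorem IsStationary.exists_isStationary_fiber (hs : IsStationary s) {f : α → α}
    (hf : ∀ a ∈ s, f a < a) : ∃ i, IsStationary (s ∩ f ⁻¹' {i}) := by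
  by_contra! h
  simp_rw [not_isStationary_iff] at h
  choose c hc hdisj using h
  obtain ⟨k, hks, hk⟩ := hs (isClub_diagInter hα hc)
  exact disjoint_left.1 (hdisj (f k)) ⟨hks, rfl⟩ (hk (f k) (hf k hks))

theorem exists_split_of_regressive [Nonempty α] {g : α → α} (hg : ∀ a ∈ s, g a < a)
    (hs : ∀ η, IsStationary {a ∈ s | η < g a}) :
    ∃ y, IsStationary (s ∩ y) ∧ IsStationary (s \ y) := by
  obtain ⟨γ, hγ⟩ := ((hs (Classical.arbitrary α)).mono (sep_subset _ _)).exists_isStationary_fiber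
    hα hg
  obtain ⟨δ, hδ⟩ := (hs γ).exists_isStationary_fiber hα fun a ha ↦ hg a ha.1
  refine ⟨g ⁻¹' {γ}, hγ, hδ.mono ?_⟩
  rintro a ⟨⟨has, hγa⟩, -⟩
  exact ⟨has, hγa.ne'⟩

end Stationary

section Splitting
variable {α : Type*} [LinearOrder α]

/-- When `a` has uncountable cofinality, the closure points of `h` below `a` form a club in `a`
missing `s`. -/
def nonreflectingPoints (s : Set α) : Set α :=
  {a ∈ s | ∃ h : α → α, MapsTo h (Iio a) (Iio a) ∧ ∀ b ∈ s, b < a → ¬ MapsTo h (Iio b) (Iio b)}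

variable [WellFoundedLT α] [IsRegularCardinalOrder α] [NoMaxOrder α] (hα : ℵ₀ < cof α)
  {s t x : Set α}
include hα

theorem isStationary_nonreflectingPoints (hs : IsStationary s) (hmin : ∀ b ∈ s, ¬ IsMin b) :
    IsStationary (nonreflectingPoints s) := by
  intro c hc
  choose next hnext_mem hnext_gt using hc.exists_gt
  have hsc : s ∩ {b | MapsTo next (Iio b) (Iio b)} ⊆ c := fun b ⟨hbs, hb⟩ ↦
    let ⟨a, hab⟩ := not_isMin_iff.1 (hmin b hbs)
    hc.mem_of_forall_inter_Ioo_nonempty hab fun x hx ↦ ⟨next x, hnext_mem x, hnext_gt x, hb hx⟩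
  obtain ⟨a, ⟨has, ha⟩, hmin⟩ := wellFounded_lt.has_min _ (hs (isClub_setOf_mapsTo_Iio hα next))
  exact ⟨a, ⟨has, next, ha, fun b hbs hba hb ↦ hmin b ⟨hbs, hb⟩ hba⟩, hsc ⟨has, ha⟩⟩

theorem exists_forall_isStationary_lt_apply (hs : IsStationary s) (ht : IsStationary t)
    (h : α → α → α) (hth : ∀ a ∈ t, ∀ b ∈ s, b < a → ¬ MapsTo (h a) (Iio b) (Iio b)) :
    ∃ ξ, ∀ η, IsStationary {a ∈ t | ξ < a ∧ η < h a ξ} := by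
  by_contra! H
  choose η hη using H
  simp_rw [not_isStationary_iff] at hη
  choose d hd hdisj using hη
  obtain ⟨b, hbs, hbη⟩ := hs (isClub_setOf_mapsTo_Iio hα η)
  obtain ⟨a, hat, had, hba⟩ := ht ((isClub_diagInter hα hd).inter hα.ne' (isClub_Ioi b))
  obtain ⟨ξ, hξb, hbh⟩ : ∃ ξ < b, b ≤ h a ξ := by
    simpa [MapsTo] using hth a hat b hbs hba
  exact disjoint_left.1 (hdisj ξ) ⟨hat, hξb.trans hba, (hbη hξb).trans_le hbh⟩
    (had ξ (hξb.trans hba))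

/-- Solovay's splitting theorem, in its weakest form. -/
theorem IsStationary.exists_split (hx : IsStationary x) :
    ∃ y, IsStationary (x ∩ y) ∧ IsStationary (x \ y) := by
  obtain ⟨x₀, -⟩ := hx.nonempty
  have : Nonempty α := ⟨x₀⟩
  set s := x ∩ Ioi x₀
  have hs : IsStationary s := hx.inter_isClub hα.ne' (isClub_Ioi x₀)
  have ht := isStationary_nonreflectingPoints hα hs fun b hb ↦ not_isMin_of_lt hb.2
  choose! h hh hsh using fun a (ha : a ∈ nonreflectingPoints s) ↦ ha.2
  obtain ⟨ξ, hξ⟩ := exists_forall_isStationary_lt_apply hα hs ht h hsh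
  obtain ⟨y, hy, hy'⟩ := exists_split_of_regressive hα (s := {a ∈ nonreflectingPoints s | ξ < a})
    (fun a ha ↦ hh a ha.1 ha.2) fun η ↦ (hξ η).mono fun a ⟨hat, hξa, hηa⟩ ↦ ⟨⟨hat, hξa⟩, hηa⟩
  have hsub : {a ∈ nonreflectingPoints s | ξ < a} ⊆ x := fun a ha ↦ ha.1.1.1
  exact ⟨y, hy.mono (inter_subset_inter_left y hsub), hy'.mono (sdiff_subset_sdiff_left hsub)⟩

end Splitting

section Bridge
variable {α : Type*} [LinearOrder α] {c x y : Set α}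

theorem isClubIn_iff_isClub [NoMaxOrder α] : IsClubIn c ↔ IsClub c := by
  refine ⟨fun ⟨hclosed, hunb⟩ ↦ ⟨dirSupClosed_iff_of_linearOrder.2 fun d hd hne a ha ↦
    hclosed d hd hne a ha, fun a ↦ (hunb a).imp fun _ ⟨hb, hab⟩ ↦ ⟨hb, hab.le⟩⟩,
    fun hc ↦ ⟨fun d hd hne a ha ↦ hc.isLUB_mem hd hne ha, hc.exists_gt⟩⟩

theorem isStatIn_iff_isStationary [NoMaxOrder α] : IsStatIn x ↔ IsStationary x :=
  forall_congr' fun _ ↦ by rw [isClubIn_iff_isClub]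

theorem statSplits_iff [NoMaxOrder α] :
    StatSplits y x ↔ IsStationary (x ∩ y) ∧ IsStationary (x \ y) := by
  simp only [StatSplits, isStatIn_iff_isStationary]

theorem statSplits_compl_iff : StatSplits yᶜ x ↔ StatSplits y x := by
  rw [StatSplits, StatSplits, sdiff_compl, ← sdiff_eq, and_comm]

theorem statSplittingNumber_le {S : Set (Set α)} (hS : ∀ y ∈ S, IsStatIn y)
    (hsplit : ∀ x, IsStatIn x → ∃ y ∈ S, StatSplits y x) : statSplittingNumber α ≤ #S :=
  csInf_le' ⟨S, hS, hsplit, rfl⟩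

theorem cof_eq_cardinalMk_of_isRegular (hreg : (#α).IsRegular)
    (hinit : ∀ a : α, #(Iio a) < #α) : cof α = #α := by
  refine (cof_le_cardinalMk α).antisymm (le_cof_iff.2 fun s hs ↦ not_lt.1 fun hsα ↦ ?_)
  have hIic (b : α) : #(Iic b) < #α := by
    rw [← Iio_insert]
    exact mk_insert_le.trans_lt (add_one_lt_of_lt hreg.aleph0_le (hinit b))
  have hcover := (card_biUnion_lt_iff_forall_of_isRegular (t := fun b _ ↦ Iic b) hreg hsα).2
    fun b _ ↦ hIic b
  rw [isCofinal_iff_iUnion_Iic_eq_univ.1 hs, mk_univ] at hcover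
  exact hcover.false

theorem isRegularCardinalOrder_of_cof_eq [WellFoundedLT α] (hcof : cof α = #α)
    (hinit : ∀ a : α, #(Iio a) < #α) : IsRegularCardinalOrder α where
  type_lt_le_ord_cof := by
    refine le_of_forall_lt fun o ho ↦ ?_
    obtain ⟨a, rfl⟩ := Ordinal.typein_surj _ ho
    rw [hcof, lt_ord, Ordinal.card_typein]
    exact hinit a

theorem noMaxOrder_of_aleph0_lt_cof (hα : ℵ₀ < cof α) : NoMaxOrder α :=
  have : Nonempty α := cof_ne_zero_iff.1 (aleph0_pos.trans hα).ne'
  have : NoTopOrder α := one_lt_cof_iff.1 (one_lt_aleph0.trans hα)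
  NoTopOrder.to_noMaxOrder α

end Bridge

section Filters
variable {α : Type*} [LinearOrder α] {x : Set α} {X S : Set (Set α)}

def restrictedClubFilter (x : Set α) : Set (Set α) := {z | ¬ IsStationary (x \ z)}

theorem measures_restrictedClubFilter
    (hX : ∀ y ∈ X, IsStationary y → ¬ (IsStationary (x ∩ y) ∧ IsStationary (x \ y))) :
    Measures (restrictedClubFilter x) X := by
  intro z hz
  by_cases h : IsStationary (x \ z)
  · refine Or.inr fun hxz ↦ ?_
    rw [sdiff_compl] at hxz
    exact hX z hz (hxz.mono inter_subset_right) ⟨hxz, h⟩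
  · exact Or.inl h

theorem exists_isStatIn_forall_not_statSplits (h : #α < statSplittingNumber α) (hX : #X ≤ #α) :
    ∃ x, IsStatIn x ∧ ∀ y ∈ X, IsStatIn y → ¬ StatSplits y x := by
  by_contra! H
  refine h.not_ge <| (statSplittingNumber_le (S := {y ∈ X | IsStatIn y}) (fun y hy ↦ hy.2)
    fun x hx ↦ ?_).trans ((mk_le_mk_of_subset (sep_subset _ _)).trans hX)
  obtain ⟨y, hyX, hy, hsplit⟩ := H x hx
  exact ⟨y, ⟨hyX, hy⟩, hsplit⟩

theorem lt_cardinalMk_of_forall_statSplits [NoMaxOrder α] [Nonempty α]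
    (hP : NormalStarFilterProperty α) (hS : ∀ x, IsStatIn x → ∃ y ∈ S, StatSplits y x) :
    #α < #S := by
  by_contra! hle
  obtain ⟨F, -, hF, hFS⟩ := hP S hle
  have : Nonempty S :=
    let ⟨y, hy, _⟩ := hS univ (isStatIn_iff_isStationary.2 .univ)
    ⟨⟨y, hy⟩⟩
  obtain ⟨e⟩ := hle
  set g : α → S := Function.invFun e
  have hchoice (i : α) : ∃ z ∈ F, z = g i ∨ z = (g i : Set α)ᶜ :=
    (hFS _ (g i).2).elim (fun h ↦ ⟨_, h, .inl rfl⟩) fun h ↦ ⟨_, h, .inr rfl⟩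
  choose f hfF hfg using hchoice
  obtain ⟨y, hyS, hy⟩ := hS _ (hF f hfF)
  obtain ⟨i, hi⟩ : ∃ i, g i = ⟨y, hyS⟩ := Function.invFun_surjective e.injective _
  have hsplit : StatSplits (f i) {k | ∀ j < k, k ∈ f j} := by
    rcases hfg i with h | h <;> rw [h, hi]
    exacts [hy, statSplits_compl_iff.2 hy]
  refine not_isStationary_of_bddAbove ?_ (isStatIn_iff_isStationary.1 hsplit.2)
  exact ⟨i, fun k ⟨hk, hki⟩ ↦ not_lt.1 fun hik ↦ hki (hk i hik)⟩

variable [WellFoundedLT α] [IsRegularCardinalOrder α] [NoMaxOrder α] (hα : ℵ₀ < cof α)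
include hα

theorem isUniformFilter_restrictedClubFilter (hx : IsStationary x) :
    IsUniformFilter (restrictedClubFilter x) := by
  have hunion {y z : Set α} : IsStationary (y ∪ z) → IsStationary y ∨ IsStationary z :=
    (isStationary_union_iff hα.ne').1
  refine ⟨by simp [restrictedClubFilter], fun z hz y hzy hy ↦ hz (hy.mono ?_),
    fun z hz y hy h ↦ (hunion (sdiff_inter ▸ h)).elim hz hy, fun z hz ↦ ?_,
    fun z hz h ↦ not_isStationary_of_bddAbove (hz.mono fun k hk ↦ hk.2) h⟩
  · exact sdiff_subset_sdiff_right hzy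
  · have hxz : IsStationary (x ∩ z) :=
      (hunion (by rwa [inter_union_sdiff])).resolve_right hz
    exact (hxz.mono inter_subset_right).cardinalMk_eq

theorem isNormalStar_restrictedClubFilter (hx : IsStationary x) :
    IsNormalStar (restrictedClubFilter x) := by
  intro f hf
  change ∀ i, ¬ IsStationary (x \ f i) at hf
  simp only [not_isStationary_iff] at hf
  choose c hc hdisj using hf
  rw [isStatIn_iff_isStationary]
  refine (hx.inter_isClub hα.ne' (isClub_diagInter hα hc)).mono fun k ⟨hkx, hk⟩ i hik ↦ ?_
  by_contra hki
  exact disjoint_left.1 (hdisj i) ⟨hkx, hki⟩ (hk i hik)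

theorem normalStarFilterProperty_of_lt_statSplittingNumber (h : #α < statSplittingNumber α) :
    NormalStarFilterProperty α := by
  intro X hX
  obtain ⟨x, hx, hxX⟩ := exists_isStatIn_forall_not_statSplits h hX
  rw [isStatIn_iff_isStationary] at hx
  refine ⟨_, isUniformFilter_restrictedClubFilter hα hx, isNormalStar_restrictedClubFilter hα hx,
    measures_restrictedClubFilter fun y hy hys ↦ ?_⟩
  rw [← statSplits_iff]
  exact hxX y hy (isStatIn_iff_isStationary.2 hys)

theorem exists_cardinalMk_eq_statSplittingNumber :
    ∃ S : Set (Set α), (∀ y ∈ S, IsStatIn y) ∧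
      (∀ x, IsStatIn x → ∃ y ∈ S, StatSplits y x) ∧ statSplittingNumber α = #S := by
  refine csInf_mem (s := {c | ∃ S : Set (Set α), (∀ y ∈ S, IsStatIn y) ∧
    (∀ x, IsStatIn x → ∃ y ∈ S, StatSplits y x) ∧ c = #S})
    ⟨_, {y | IsStatIn y}, fun _ h ↦ h, fun x hx ↦ ?_, rfl⟩
  obtain ⟨y, hy, hy'⟩ := (isStatIn_iff_isStationary.1 hx).exists_split hα
  exact ⟨y, isStatIn_iff_isStationary.2 (hy.mono inter_subset_right), statSplits_iff.2 ⟨hy, hy'⟩⟩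

end Filters

/-- For a regular uncountable cardinal `κ`, `s^cl_κ > κ` if and only if `κ` has the normal*
filter property. Here `κ` is represented as a well-ordered type `α` of regular uncountable
cardinality all of whose proper initial segments are of size `< #α`. -/
theorem statSplittingNumber_gt_iff_normalStarFilterProperty {α : Type*} [LinearOrder α]
    [WellFoundedLT α]
    (hreg : (#α).IsRegular) (hunc : ℵ₀ < #α)
    (hinit : ∀ a : α, #(Set.Iio a) < #α) :
    #α < statSplittingNumber α ↔ NormalStarFilterProperty α := by
  have hcof : cof α = #α := cof_eq_cardinalMk_of_isRegular hreg hinit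
  have : IsRegularCardinalOrder α := isRegularCardinalOrder_of_cof_eq hcof hinit
  have hα : ℵ₀ < cof α := hcof ▸ hunc
  have : NoMaxOrder α := noMaxOrder_of_aleph0_lt_cof hα
  have : Infinite α := infinite_iff.2 hunc.le
  refine ⟨normalStarFilterProperty_of_lt_statSplittingNumber hα, fun hP ↦ ?_⟩
  obtain ⟨S, -, hS, hSκ⟩ := exists_cardinalMk_eq_statSplittingNumber hα
  exact hSκ ▸ lt_cardinalMk_of_forall_statSplits hP hS
end
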